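/- Fix an integer d ≥ 1. For every point p ∈ ℝ^d and every radius r > 0 such that the closed ball Q = closedBall(p, r) is contained in the unit cube [0,1]^d, there exist a level k ∈ ℕ with 2^(−k) < 4r and a collection of at most 2^d dyadic cubes of level k whose union contains Q; in particular the total volume of these cubes is less than 2^d·(4r)^d. -/

import Mathlib

/-!
Choose the level `k` with `2r ≤ 2⁻ᵏ < 4r` (or `k = 1` when `r > 1/4`, where the two halves of
`[0,1]` suffice). Each coordinate projection `[pᵢ - r, pᵢ + r]` of the ball lies in `[0,1]` and is
no longer than `2⁻ᵏ`, so it lies in two adjacent dyadic intervals of level `k`. The ball is then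
covered by the `2ᵈ` products of these intervals, of total volume `2ᵈ 2⁻ᵏᵈ < 2ᵈ (4r)ᵈ`.
-/

open MeasureTheory Metric Set

/-- The dyadic cube of level `k` with index vector `a` in the unit cube `[0,1]^d`:
`∏ᵢ [aᵢ·2⁻ᵏ, (aᵢ+1)·2⁻ᵏ]`. -/
def dyadicCube (d k : ℕ) (a : Fin d → ℕ) : Set (EuclideanSpace ℝ (Fin d)) :=
  {x | ∀ i, x i ∈ Icc ((a i : ℝ) / 2 ^ k) (((a i : ℝ) + 1) / 2 ^ k)}

/-- The unit cube `[0,1]^d`. -/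
def unitCube (d : ℕ) : Set (EuclideanSpace ℝ (Fin d)) := {x | ∀ i, x i ∈ Icc (0 : ℝ) 1}

lemma sub_nonneg_and_add_le_one_of_closedBall_subset_unitCube {d : ℕ}
    {p : EuclideanSpace ℝ (Fin d)} {r : ℝ} (hr : 0 ≤ r) (hQ : closedBall p r ⊆ unitCube d)
    (i : Fin d) : 0 ≤ p i - r ∧ p i + r ≤ 1 := by
  have key : ∀ s : ℝ, |s| ≤ r → p i + s ∈ Icc (0 : ℝ) 1 := fun s hs => by
    have hmem : p + s • EuclideanSpace.single i (1 : ℝ) ∈ closedBall p r := by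
      simpa [mem_closedBall, dist_self_add_left, norm_smul] using hs
    simpa using hQ hmem i
  have hlo := (key (-r) (by simp [abs_of_nonneg hr])).1
  have hhi := (key r (abs_of_nonneg hr).le).2
  constructor <;> linarith

lemma exists_level_two_mul_le_inv_pow_lt_four_mul {r : ℝ} (hr : 0 < r) (hr4 : r ≤ 1 / 4) :
    ∃ k : ℕ, 1 ≤ k ∧ 2 * r ≤ ((2 : ℝ) ^ k)⁻¹ ∧ ((2 : ℝ) ^ k)⁻¹ < 4 * r := by
  obtain ⟨k, hle, hlt⟩ := exists_nat_pow_near (x := (2 * r)⁻¹) (y := (2 : ℝ))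
    (by rw [one_le_inv₀ (by positivity)]; linarith) one_lt_two
  have hk : 1 ≤ k := by
    by_contra! h
    have : (2 * r)⁻¹ < 2 := by simpa [Nat.lt_one_iff.mp h] using hlt
    rw [inv_lt_comm₀ (by positivity) two_pos] at this
    linarith
  refine ⟨k, hk, ?_, ?_⟩
  · rwa [le_inv_comm₀ (by positivity) (by positivity)]
  · have h := (inv_lt_comm₀ (by positivity) (by positivity)).mp hlt
    rw [pow_succ, mul_inv] at h
    linarith

lemma exists_dyadic_pair_cover {k : ℕ} (hk : 1 ≤ k) {lo hi : ℝ} (hlo : 0 ≤ lo) (hhi : hi ≤ 1)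
    (hlen : hi - lo ≤ ((2 : ℝ) ^ k)⁻¹) :
    ∃ b : ℕ, b + 2 ≤ 2 ^ k ∧ (b : ℝ) / 2 ^ k ≤ lo ∧ hi ≤ ((b : ℝ) + 2) / 2 ^ k := by
  have hpos : (0 : ℝ) < 2 ^ k := by positivity
  simp only [div_le_iff₀ hpos, le_div_iff₀ hpos]
  set m := ⌊lo * 2 ^ k⌋₊
  have hm_le : (m : ℝ) ≤ lo * 2 ^ k := Nat.floor_le (by positivity)
  have hm_gt : lo * 2 ^ k < m + 1 := Nat.lt_floor_add_one _
  have hhi' : hi * 2 ^ k ≤ lo * 2 ^ k + 1 := by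
    have := mul_le_mul_of_nonneg_right hlen hpos.le
    rw [inv_mul_cancel₀ hpos.ne', sub_mul] at this
    linarith
  by_cases hfit : m + 2 ≤ 2 ^ k
  · exact ⟨m, hfit, hm_le, by linarith⟩
  · -- near the right end of `[0, 1]`, use the last two intervals
    obtain ⟨b, hb⟩ := Nat.exists_eq_add_of_le
      (Nat.pow_le_pow_right two_pos hk : 2 ^ 1 ≤ 2 ^ k)
    have hb' : (2 : ℝ) ^ k = b + 2 := by exact_mod_cast hb.trans (add_comm _ _)
    have hmb : (b : ℝ) + 1 ≤ m := by exact_mod_cast (by omega : b + 1 ≤ m)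
    refine ⟨b, by omega, by nlinarith, ?_⟩
    rw [← hb']
    nlinarith

lemma exists_dyadic_level_and_pair_cover {ι : Type*} {c : ι → ℝ} {r : ℝ} (hr : 0 < r)
    (hc : ∀ i, 0 ≤ c i - r ∧ c i + r ≤ 1) :
    ∃ (k : ℕ) (b : ι → ℕ), ((2 : ℝ) ^ k)⁻¹ < 4 * r ∧
      ∀ i, b i + 2 ≤ 2 ^ k ∧ (b i : ℝ) / 2 ^ k ≤ c i - r ∧ c i + r ≤ ((b i : ℝ) + 2) / 2 ^ k := by
  rcases le_or_gt r (1 / 4) with hsmall | hlarge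
  · obtain ⟨k, hk, hle, hlt⟩ := exists_level_two_mul_le_inv_pow_lt_four_mul hr hsmall
    choose b hb using fun i =>
      exists_dyadic_pair_cover hk (hc i).1 (hc i).2 (by linarith : c i + r - (c i - r) ≤ _)
    exact ⟨k, b, hlt, hb⟩
  · exact ⟨1, 0, by norm_num; linarith, fun i => ⟨le_rfl, by simp [(hc i).1], by simp [(hc i).2]⟩⟩

lemma exists_fin_two_mem_Icc {t c : ℝ} {b : ℕ} (ht : t ∈ Icc ((b : ℝ) / c) (((b : ℝ) + 2) / c)) :
    ∃ j : Fin 2, t ∈ Icc (((b + j : ℕ) : ℝ) / c) ((((b + j : ℕ) : ℝ) + 1) / c) := by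
  by_cases hleft : t ≤ ((b : ℝ) + 1) / c
  · exact ⟨0, by simpa using ⟨ht.1, hleft⟩⟩
  · refine ⟨1, ?_, ?_⟩ <;> simp only [Fin.val_one, Nat.cast_add, Nat.cast_one]
    · exact (not_le.mp hleft).le
    · convert ht.2 using 2; ring

def adjacentIndices {d : ℕ} (b : Fin d → ℕ) : Finset (Fin d → ℕ) :=
  Finset.univ.image fun f : Fin d → Fin 2 => fun i => b i + f i

lemma card_adjacentIndices_le {d : ℕ} (b : Fin d → ℕ) : (adjacentIndices b).card ≤ 2 ^ d :=
  Finset.card_image_le.trans (by simp)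

lemma lt_of_mem_adjacentIndices {d N : ℕ} {b a : Fin d → ℕ} (hb : ∀ i, b i + 2 ≤ N)
    (ha : a ∈ adjacentIndices b) (i : Fin d) : a i < N := by
  obtain ⟨f, -, rfl⟩ := Finset.mem_image.mp ha
  have := (f i).isLt
  have := hb i
  dsimp only
  omega

lemma subset_iUnion_dyadicCube_adjacentIndices {d : ℕ} (k : ℕ) (b : Fin d → ℕ) :
    {x : EuclideanSpace ℝ (Fin d) | ∀ i, x i ∈ Icc ((b i : ℝ) / 2 ^ k) (((b i : ℝ) + 2) / 2 ^ k)}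
      ⊆ ⋃ a ∈ adjacentIndices b, dyadicCube d k a := by
  intro x hx
  choose f hf using fun i => exists_fin_two_mem_Icc (hx i)
  exact mem_iUnion₂.mpr ⟨fun i => b i + f i, Finset.mem_image_of_mem _ (Finset.mem_univ f), hf⟩

lemma volume_dyadicCube (d k : ℕ) (a : Fin d → ℕ) :
    volume (dyadicCube d k a) = ENNReal.ofReal (((2 : ℝ) ^ k)⁻¹) ^ d := by
  have heq : dyadicCube d k a = (MeasurableEquiv.toLp 2 (Fin d → ℝ)).symm ⁻¹'
      Icc (fun i => (a i : ℝ) / 2 ^ k) (fun i => ((a i : ℝ) + 1) / 2 ^ k) := by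
    ext x
    simp only [dyadicCube, mem_ofPred_eq, mem_preimage, mem_Icc, Pi.le_def, forall_and]
    rfl
  rw [heq, (EuclideanSpace.volume_preserving_symm_measurableEquiv_toLp (Fin d)).measure_preimage
    measurableSet_Icc.nullMeasurableSet, Real.volume_Icc_pi]
  simp only [add_div, add_sub_cancel_left, one_div, Finset.prod_const, Finset.card_univ,
    Fintype.card_fin]

lemma sum_volume_dyadicCube_lt {d k : ℕ} (hd : d ≠ 0) {S : Finset (Fin d → ℕ)}
    (hS : S.card ≤ 2 ^ d) {s : ℝ} (hs : ((2 : ℝ) ^ k)⁻¹ < s) :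
    ∑ a ∈ S, volume (dyadicCube d k a) < ENNReal.ofReal (2 ^ d * s ^ d) := by
  have hpos : (0 : ℝ) ≤ ((2 : ℝ) ^ k)⁻¹ := by positivity
  simp only [volume_dyadicCube, Finset.sum_const, nsmul_eq_mul, ← ENNReal.ofReal_pow hpos,
    ← ENNReal.ofReal_natCast, ← ENNReal.ofReal_mul (Nat.cast_nonneg _)]
  rw [ENNReal.ofReal_lt_ofReal_iff (mul_pos (by positivity) (pow_pos (hpos.trans_lt hs) d))]
  calc (S.card : ℝ) * ((2 : ℝ) ^ k)⁻¹ ^ d ≤ 2 ^ d * ((2 : ℝ) ^ k)⁻¹ ^ d := by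
        gcongr; exact_mod_cast hS
    _ < 2 ^ d * s ^ d := by gcongr

theorem cube_tiling_arrwwid_upper_bound (d : ℕ) (hd : 1 ≤ d)
    (p : EuclideanSpace ℝ (Fin d)) (r : ℝ) (hr : 0 < r)
    (hQ : closedBall p r ⊆ unitCube d) :
    ∃ (k : ℕ) (S : Finset (Fin d → ℕ)),
      ((2 : ℝ) ^ k)⁻¹ < 4 * r ∧
      S.card ≤ 2 ^ d ∧
      (∀ a ∈ S, ∀ i, a i < 2 ^ k) ∧
      closedBall p r ⊆ ⋃ a ∈ S, dyadicCube d k a ∧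
      ∑ a ∈ S, volume (dyadicCube d k a) < ENNReal.ofReal (2 ^ d * (4 * r) ^ d) := by
  obtain ⟨k, b, hk, hb⟩ := exists_dyadic_level_and_pair_cover hr
    (sub_nonneg_and_add_le_one_of_closedBall_subset_unitCube hr.le hQ)
  have hcover : closedBall p r ⊆ ⋃ a ∈ adjacentIndices b, dyadicCube d k a := by
    refine Subset.trans ?_ (subset_iUnion_dyadicCube_adjacentIndices k b)
    intro x hx i
    have hxi : |x i - p i| ≤ r := (PiLp.dist_apply_le x p i).trans (mem_closedBall.mp hx)
    obtain ⟨-, hlo, hhi⟩ := hb i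
    constructor <;> linarith [abs_le.mp hxi]
  exact ⟨k, adjacentIndices b, hk, card_adjacentIndices_le b,
    fun a ha => lt_of_mem_adjacentIndices (fun i => (hb i).1) ha, hcover,
    sum_volume_dyadicCube_lt (by omega) (card_adjacentIndices_le b) hk⟩
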